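/- Let N ≥ 1, p > 1, g : ℝ → ℝ nonnegative, nondecreasing and locally Lipschitz, and u a radial solution of -Δ_p u = g(u) on the punctured unit ball with u_r(r) < 0 for all r ∈ (0,1). Then max_{t∈[1/2,1]} |u_r(t)| ≤ 2^{N/(p-1)} min_{t∈[1/2,1]} |u_r(t)|. -/

import Mathlib

/-!
Write `F = |u_r|^{p-1}` and `H(r) = r^{N-1} F(r)`, so that `H' = r^{N-1} g(u)`. Since `g ≥ 0`,
`H` is nondecreasing. Since `u` decreases and `g` is nondecreasing, `g(u)` is nonincreasing, so
comparing `H'` with `r^{N-1} g(u(s))` on `[s, t]` gives `N (H t - H s) ≤ g(u(s)) (t^N - s^N)`, and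
letting `s → 0` in the reverse comparison on `[s, t]` gives `g(u(t)) t^N ≤ N H(t)`. Together they
make `H(r) / r^N = F(r) / r` nonincreasing. On `[1/2, 1]` the first monotonicity bounds `F` from
the left by a factor `2^{N-1}` and the second bounds it from the right by a factor `2`.
-/

open Real Set Filter Topology

lemma monotoneOn_of_hasDerivAt_nonneg {D : Set ℝ} (hD : Convex ℝ D) {f f' : ℝ → ℝ}
    (hf : ∀ x ∈ D, HasDerivAt f (f' x) x) (hf' : ∀ x ∈ D, 0 ≤ f' x) : MonotoneOn f D :=
  monotoneOn_of_hasDerivWithinAt_nonneg hD (fun x hx => (hf x hx).continuousAt.continuousWithinAt)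
    (fun x hx => (hf x (interior_subset hx)).hasDerivWithinAt)
    (fun x hx => hf' x (interior_subset hx))

lemma antitoneOn_of_hasDerivAt_nonpos {D : Set ℝ} (hD : Convex ℝ D) {f f' : ℝ → ℝ}
    (hf : ∀ x ∈ D, HasDerivAt f (f' x) x) (hf' : ∀ x ∈ D, f' x ≤ 0) : AntitoneOn f D :=
  antitoneOn_of_hasDerivWithinAt_nonpos hD (fun x hx => (hf x hx).continuousAt.continuousWithinAt)
    (fun x hx => (hf x (interior_subset hx)).hasDerivWithinAt)
    (fun x hx => hf' x (interior_subset hx))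

section RadialDerivative

variable {N : ℝ} {G H : ℝ → ℝ}

lemma mul_sub_le_mul_rpow_sub {c s t : ℝ} (hN : 0 ≤ N) (hs : 0 < s) (hst : s ≤ t)
    (hH : ∀ r ∈ Icc s t, HasDerivAt H (r ^ (N - 1) * G r) r) (hGc : ∀ r ∈ Icc s t, G r ≤ c) :
    N * (H t - H s) ≤ c * (t ^ N - s ^ N) := by
  have hmono : MonotoneOn (fun r => c * r ^ N - N * H r) (Icc s t) := by
    refine monotoneOn_of_hasDerivAt_nonneg (convex_Icc s t)
      (f' := fun r => c * (N * r ^ (N - 1)) - N * (r ^ (N - 1) * G r))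
      (fun r hr => ?_) fun r hr => ?_
    · exact ((hasDerivAt_rpow_const (Or.inl (hs.trans_le hr.1).ne')).const_mul c).sub
        ((hH r hr).const_mul N)
    · have hr0 : 0 ≤ r ^ (N - 1) := rpow_nonneg (hs.trans_le hr.1).le _
      nlinarith [mul_nonneg (mul_nonneg hN hr0) (sub_nonneg.2 (hGc r hr))]
  linarith [hmono (left_mem_Icc.2 hst) (right_mem_Icc.2 hst) hst]

lemma mul_rpow_sub_le_mul_sub {c s t : ℝ} (hN : 0 ≤ N) (hs : 0 < s) (hst : s ≤ t)
    (hH : ∀ r ∈ Icc s t, HasDerivAt H (r ^ (N - 1) * G r) r) (hcG : ∀ r ∈ Icc s t, c ≤ G r) :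
    c * (t ^ N - s ^ N) ≤ N * (H t - H s) := by
  have := mul_sub_le_mul_rpow_sub (G := -G) (H := -H) (c := -c) hN hs hst
    (fun r hr => by simpa only [Pi.neg_apply, mul_neg] using (hH r hr).neg)
    (fun r hr => neg_le_neg (hcG r hr))
  simp only [Pi.neg_apply] at this
  linarith

variable {b : ℝ}

lemma mul_rpow_le_of_hasDerivAt (hN : 0 < N) (hb : 0 < b)
    (hH : ∀ r ∈ Ioc 0 b, HasDerivAt H (r ^ (N - 1) * G r) r) (hG : AntitoneOn G (Ioc 0 b))
    (hH0 : ∀ r ∈ Ioc 0 b, 0 ≤ H r) : G b * b ^ N ≤ N * H b := by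
  have hbound : ∀ a ∈ Ioo 0 b, G b * b ^ N ≤ N * H b + G b * a ^ N := by
    intro a ha
    have hsub : Icc a b ⊆ Ioc 0 b := Icc_subset_Ioc ha.1 le_rfl
    have := mul_rpow_sub_le_mul_sub hN.le ha.1 ha.2.le (fun r hr => hH r (hsub hr))
      (fun r hr => hG (hsub hr) ⟨hb, le_rfl⟩ hr.2)
    nlinarith [hH0 a ⟨ha.1, ha.2.le⟩]
  have hlim : Tendsto (fun a : ℝ => N * H b + G b * a ^ N) (𝓝[>] 0) (𝓝 (N * H b)) := by
    have := ((continuousAt_rpow_const 0 N (Or.inr hN.le)).const_mul (G b)).const_add (N * H b)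
    simpa only [zero_rpow hN.ne', mul_zero, add_zero] using
      this.tendsto.mono_left nhdsWithin_le_nhds
  exact ge_of_tendsto hlim (eventually_of_mem (Ioo_mem_nhdsGT hb) hbound)

lemma antitoneOn_div_rpow_of_hasDerivAt (hN : 0 < N)
    (hH : ∀ r ∈ Ioc 0 b, HasDerivAt H (r ^ (N - 1) * G r) r) (hG : AntitoneOn G (Ioc 0 b))
    (hH0 : ∀ r ∈ Ioc 0 b, 0 ≤ H r) : AntitoneOn (fun r => H r / r ^ N) (Ioc 0 b) := by
  intro s hs t ht hst
  have hsub : Icc s t ⊆ Ioc 0 b := Icc_subset_Ioc hs.1 ht.2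
  have hstep := mul_sub_le_mul_rpow_sub hN.le hs.1 hst (fun r hr => hH r (hsub hr))
    (fun r hr => hG hs (hsub hr) hr.1)
  have hkey : G s * s ^ N ≤ N * H s :=
    mul_rpow_le_of_hasDerivAt hN hs.1 (fun r hr => hH r ⟨hr.1, hr.2.trans hs.2⟩)
      (hG.mono (Ioc_subset_Ioc_right hs.2)) (fun r hr => hH0 r ⟨hr.1, hr.2.trans hs.2⟩)
  have hsN : 0 < s ^ N := rpow_pos_of_pos hs.1 N
  have htN : 0 < t ^ N := rpow_pos_of_pos ht.1 N
  have hgrow : s ^ N ≤ t ^ N := rpow_le_rpow hs.1.le hst hN.le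
  rw [div_le_div_iff₀ htN hsN, ← mul_le_mul_iff_right₀ hN]
  nlinarith [mul_le_mul_of_nonneg_right hkey (sub_nonneg.2 hgrow)]

lemma antitoneOn_div_of_hasDerivAt_rpow_mul {F : ℝ → ℝ} (hN : 0 < N)
    (hH : ∀ r ∈ Ioc 0 b, HasDerivAt (fun r => r ^ (N - 1) * F r) (r ^ (N - 1) * G r) r)
    (hG : AntitoneOn G (Ioc 0 b)) (hF0 : ∀ r ∈ Ioc 0 b, 0 ≤ F r) :
    AntitoneOn (fun r => F r / r) (Ioc 0 b) := by
  refine (antitoneOn_div_rpow_of_hasDerivAt hN hH hG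
    (fun r hr => mul_nonneg (rpow_nonneg hr.1.le _) (hF0 r hr))).congr fun r hr => ?_
  have hr0 : r ≠ 0 := hr.1.ne'
  simp only
  rw [rpow_sub_one hr0]
  field_simp [(rpow_pos_of_pos hr.1 N).ne']

end RadialDerivative

lemma le_two_rpow_mul_of_monotoneOn_of_antitoneOn {N : ℝ} (hN : 1 ≤ N) {F : ℝ → ℝ}
    (hmono : MonotoneOn (fun r => r ^ (N - 1) * F r) (Icc (1 / 2) 1))
    (hanti : AntitoneOn (fun r => F r / r) (Icc (1 / 2) 1)) {s t : ℝ}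
    (hs : s ∈ Icc (1 / 2 : ℝ) 1) (ht : t ∈ Icc (1 / 2 : ℝ) 1) (hFs : 0 ≤ F s) :
    F t ≤ 2 ^ N * F s := by
  have hs0 : 0 < s := by linarith [hs.1]
  rcases le_total t s with hts | hst
  · rcases lt_or_ge (F t) 0 with hFt | hFt
    · nlinarith [rpow_pos_of_pos (zero_lt_two' ℝ) N]
    have hscale : 1 ≤ (2 * t) ^ (N - 1) := one_le_rpow (by linarith [ht.1]) (by linarith)
    have hs1 : s ^ (N - 1) ≤ 1 := rpow_le_one hs0.le hs.2 (by linarith)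
    have h2 : (2 : ℝ) ^ (N - 1) ≤ 2 ^ N := rpow_le_rpow_of_exponent_le one_le_two (by linarith)
    calc F t ≤ (2 * t) ^ (N - 1) * F t := le_mul_of_one_le_left hFt hscale
      _ = 2 ^ (N - 1) * (t ^ (N - 1) * F t) := by
        rw [mul_rpow zero_le_two (by linarith [ht.1]), mul_assoc]
      _ ≤ 2 ^ (N - 1) * (s ^ (N - 1) * F s) :=
        mul_le_mul_of_nonneg_left (hmono ht hs hts) (by positivity)
      _ ≤ 2 ^ N * F s := by gcongr; exact mul_le_of_le_one_left hFs hs1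
  · have h2 : (2 : ℝ) ≤ 2 ^ N := by
      simpa only [rpow_one] using rpow_le_rpow_of_exponent_le one_le_two hN
    have hts : t / s ≤ 2 := by rw [div_le_iff₀ hs0]; linarith [ht.2, hs.1]
    calc F t = t * (F t / t) := by field_simp [(hs0.trans_le hst).ne']
      _ ≤ t * (F s / s) :=
        mul_le_mul_of_nonneg_left (hanti hs ht hst) (by linarith [ht.1])
      _ = t / s * F s := by ring
      _ ≤ 2 ^ N * F s := by gcongr; linarith

lemma le_rpow_div_mul_of_rpow_le {x y a c q : ℝ} (hx : 0 ≤ x) (hy : 0 ≤ y) (ha : 0 ≤ a)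
    (hq : 0 < q) (h : x ^ q ≤ a ^ c * y ^ q) : x ≤ a ^ (c / q) * y := by
  rw [← rpow_le_rpow_iff hx (by positivity) hq, mul_rpow (by positivity) hy, ← rpow_mul ha,
    div_mul_cancel₀ _ hq.ne']
  exact h

theorem max_le_min_on_annulus_general
    (N p : ℝ) (hN : 1 ≤ N) (hp : 1 < p)
    (g : ℝ → ℝ) (hg0 : ∀ x, 0 ≤ g x) (hgmono : Monotone g)
    (u u' : ℝ → ℝ)
    (hu : ∀ r ∈ Ioc (0:ℝ) 1, HasDerivAt u (u' r) r)
    (hu'neg : ∀ r ∈ Ioc (0:ℝ) 1, u' r < 0)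
    (heq : ∀ r ∈ Ioc (0:ℝ) 1,
      HasDerivAt (fun s => s ^ (N - 1) * |u' s| ^ (p - 1))
        (r ^ (N - 1) * g (u r)) r) :
    ∀ s ∈ Icc (1/2 : ℝ) 1, ∀ t ∈ Icc (1/2 : ℝ) 1,
      |u' t| ≤ 2 ^ (N / (p - 1)) * |u' s| := by
  intro s hs t ht
  have hF0 : ∀ r, 0 ≤ |u' r| ^ (p - 1) := fun r => rpow_nonneg (abs_nonneg _) _
  have hgu : AntitoneOn (fun r => g (u r)) (Ioc 0 1) := hgmono.comp_antitoneOn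
    (antitoneOn_of_hasDerivAt_nonpos (convex_Ioc 0 1) hu fun r hr => (hu'neg r hr).le)
  have hmono : MonotoneOn (fun r => r ^ (N - 1) * |u' r| ^ (p - 1)) (Ioc 0 1) :=
    monotoneOn_of_hasDerivAt_nonneg (convex_Ioc 0 1) heq
      fun r hr => mul_nonneg (rpow_nonneg hr.1.le _) (hg0 _)
  have hanti : AntitoneOn (fun r => |u' r| ^ (p - 1) / r) (Ioc 0 1) :=
    antitoneOn_div_of_hasDerivAt_rpow_mul (by linarith) heq hgu fun r _ => hF0 r
  have hsub : Icc (1 / 2 : ℝ) 1 ⊆ Ioc 0 1 := Icc_subset_Ioc (by norm_num) le_rfl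
  exact le_rpow_div_mul_of_rpow_le (abs_nonneg _) (abs_nonneg _) zero_le_two (by linarith)
    (le_two_rpow_mul_of_monotoneOn_of_antitoneOn hN (hmono.mono hsub) (hanti.mono hsub) hs ht
      (hF0 s))

/-- For a radial solution of `-Δ_p u = g(u)` on the punctured unit ball with `u_r < 0`,
where `g ≥ 0` is nondecreasing and locally Lipschitz,
`max_{t∈[1/2,1]} |u_r(t)| ≤ 2^{N/(p-1)} min_{t∈[1/2,1]} |u_r(t)|`. -/
theorem max_le_min_on_annulus
    (N p : ℝ) (hN : 1 ≤ N) (hp : 1 < p)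
    (g : ℝ → ℝ) (hg0 : ∀ x, 0 ≤ g x) (hgmono : Monotone g)
    (hglip : LocallyLipschitz g)
    (u u' : ℝ → ℝ)
    (hu : ∀ r ∈ Ioc (0:ℝ) 1, HasDerivAt u (u' r) r)
    (hu'neg : ∀ r ∈ Ioc (0:ℝ) 1, u' r < 0)
    (heq : ∀ r ∈ Ioc (0:ℝ) 1,
      HasDerivAt (fun s => s ^ (N - 1) * |u' s| ^ (p - 1))
        (r ^ (N - 1) * g (u r)) r) :
    ∀ s ∈ Icc (1/2 : ℝ) 1, ∀ t ∈ Icc (1/2 : ℝ) 1,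
      |u' t| ≤ 2 ^ (N / (p - 1)) * |u' s| :=
  max_le_min_on_annulus_general N p hN hp g hg0 hgmono u u' hu hu'neg heq
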